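/- arXiv:1103.0071 — 4 statements merged into one kernel-verified Lean document; each statement's English description precedes it below -/
import Mathlib

section
/- Let 0 < ε < 1/2 and let λ : [0,1] → ℝ satisfy ‖λ‖_{1/2} ≤ 4 + 2ε and λ(1) = 0. Let x < λ(0) be a real number that is captured by λ at time 1, i.e. the real solution g_t(x) of ∂_t g_t(x) = 2/(g_t(x) − λ(t)), g_0(x) = x, exists for all t ∈ [0,1) and g_t(x) → 0 as t → 1⁻. Define x_s := e^{s/2} g_{1−e^{−s}}(x) for s ∈ [0,∞) and L := 2 + ε − √(ε(ε+4)). Then there exists a finite time S₀ such that x_s ∈ [L, L + 5√ε] for all s ≥ S₀. -/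
open Set Filter Topology

noncomputable section

/-- `HalfLipOn lam S C` : `lam` is Lip(1/2) on `S` with constant `C`. -/
def HalfLipOn (lam : ℝ → ℝ) (S : Set ℝ) (C : ℝ) : Prop :=
  ∀ s ∈ S, ∀ t ∈ S, |lam t - lam s| ≤ C * Real.sqrt |t - s|

/-- `RealLoewnerSolOn lam x g s` means that the real-valued function `g` solves the chordal
Loewner equation `∂ₜ g t = 2 / (g t - lam t)`, `g 0 = x`, on the time interval `[0, s)`
(one-sided derivative at `0`). -/
def RealLoewnerSolOn (lam : ℝ → ℝ) (x : ℝ) (g : ℝ → ℝ) (s : ℝ) : Prop :=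
  g 0 = x ∧ ∀ t ∈ Set.Ico (0 : ℝ) s,
    g t ≠ lam t ∧ HasDerivWithinAt g (2 / (g t - lam t)) (Set.Ici 0) t

/-!
After the change of time `t = 1 - e^{-s}` and of scale `e^{s/2}`, the captured point
`X s = x_s` solves `X' = X/2 + 2/(X - Λ)` with `Λ s = e^{s/2} λ(1 - e^{-s})`. The Lip(1/2)
bound and `λ 1 = 0` give `Λ ≤ C := 4 + 2ε`; the point stays to the left of the driving
function and `g` decreases to `0`, so `0 < X < Λ`. Hence `X' ≤ -(X² - CX + 4)/(2C)` wherever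
this quadratic is nonnegative; its roots are `L` and `L + 2√(ε(ε+4)) < L + 5√ε`. Once below `L`,
the positive function `X` would stay there and decrease at a fixed rate for all time, which is
impossible; for the same reason `X` cannot stay above `L + 5√ε`, and at `L + 5√ε` it cannot cross
upwards.
-/

open Real

theorem le_add_mul_of_hasDerivAt_lt {f f' : ℝ → ℝ} {s₀ a m : ℝ}
    (hf : ∀ s ≥ s₀, HasDerivAt f (f' s) s) (h₀ : f s₀ ≤ a)
    (hbound : ∀ s ≥ s₀, f s = a + m * (s - s₀) → f' s < m) {s : ℝ} (hs : s₀ ≤ s) :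
    f s ≤ a + m * (s - s₀) := by
  have hline : ∀ u, HasDerivAt (fun v => a + m * (v - s₀)) m u := fun u => by
    simpa using (((hasDerivAt_id u).sub_const s₀).const_mul m).const_add a
  refine image_le_of_deriv_right_lt_deriv_boundary
    (fun u hu => (hf u hu.1).continuousAt.continuousWithinAt)
    (fun u hu => (hf u hu.1).hasDerivWithinAt) (by simpa using h₀) hline
    (fun u hu => hbound u hu.1) ⟨hs, le_rfl⟩

theorem exists_neg_lt_deriv_of_pos {f f' : ℝ → ℝ} {s₀ δ : ℝ} (hδ : 0 < δ)
    (hf : ∀ s ≥ s₀, HasDerivAt f (f' s) s) (hpos : ∀ s ≥ s₀, 0 < f s) :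
    ∃ s ≥ s₀, -δ < f' s := by
  by_contra! hdecr
  have hf₀ := hpos s₀ le_rfl
  have hs : s₀ ≤ s₀ + 2 * f s₀ / δ := le_add_of_nonneg_right (by positivity)
  have hdecay := le_add_mul_of_hasDerivAt_lt hf le_rfl (m := -δ / 2)
    (fun s hs _ => by linarith [hdecr s hs]) hs
  have hzero : f s₀ + -δ / 2 * (s₀ + 2 * f s₀ / δ - s₀) = 0 := by field_simp; ring
  linarith [hpos _ hs]

theorem StrictAntiOn.lt_of_tendsto_nhdsLT {f : ℝ → ℝ} {a b l : ℝ} (hf : StrictAntiOn f (Ico a b))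
    (hl : Tendsto f (𝓝[<] b) (𝓝 l)) {t : ℝ} (ht : t ∈ Ico a b) : l < f t := by
  obtain ⟨t', htt', ht'b⟩ := exists_between ht.2
  have ht' : t' ∈ Ico a b := ⟨ht.1.trans htt'.le, ht'b⟩
  have hev : ∀ᶠ u in 𝓝[<] b, f u ≤ f t' := by
    filter_upwards [Ioo_mem_nhdsLT ht'b] with u hu
    exact (hf ht' ⟨ht'.1.trans hu.1.le, hu.2⟩ hu.1).le
  exact (le_of_tendsto hl hev).trans_lt (hf ht ht' htt')

theorem HalfLipOn.continuousOn {lam : ℝ → ℝ} {S : Set ℝ} {C : ℝ} (h : HalfLipOn lam S C) :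
    ContinuousOn lam S := by
  intro t ht
  rw [ContinuousWithinAt, tendsto_iff_dist_tendsto_zero]
  have hbound : Tendsto (fun u => C * √|u - t|) (𝓝[S] t) (𝓝 0) :=
    ((by fun_prop : Continuous fun u => C * √|u - t|).tendsto' t 0 (by simp)).mono_left
      nhdsWithin_le_nhds
  refine squeeze_zero' (Eventually.of_forall fun _ => dist_nonneg) ?_ hbound
  filter_upwards [self_mem_nhdsWithin] with u hu
  exact h t ht u hu

namespace RealLoewnerSolOn

variable {lam g : ℝ → ℝ} {x T : ℝ}

theorem continuousOn (hg : RealLoewnerSolOn lam x g T) : ContinuousOn g (Ico 0 T) :=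
  fun t ht => ((hg.2 t ht).2.continuousWithinAt).mono Ico_subset_Ici_self

theorem lt_driving (hg : RealLoewnerSolOn lam x g T) (hlam : ContinuousOn lam (Ico 0 T))
    (hx : x < lam 0) {t : ℝ} (ht : t ∈ Ico 0 T) : g t < lam t := by
  by_contra! hle
  have h₀ : (0 : ℝ) ∈ Ico 0 T := ⟨le_rfl, ht.1.trans_lt ht.2⟩
  obtain ⟨u, hu, hgu⟩ := isPreconnected_Ico.intermediate_value h₀ ht (hg.continuousOn.sub hlam)
    (show (0 : ℝ) ∈ Icc (g 0 - lam 0) (g t - lam t) from ⟨by linarith [hg.1], by linarith⟩)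
  exact (hg.2 u hu).1 (sub_eq_zero.1 hgu)

theorem strictAntiOn (hg : RealLoewnerSolOn lam x g T)
    (hlt : ∀ t ∈ Ico 0 T, g t < lam t) : StrictAntiOn g (Ico 0 T) := by
  refine strictAntiOn_of_deriv_neg (convex_Ico 0 T) hg.continuousOn fun t ht => ?_
  rw [interior_Ico] at ht
  have htT : t ∈ Ico 0 T := Ioo_subset_Ico_self ht
  rw [((hg.2 t htT).2.hasDerivAt (Ici_mem_nhds ht.1)).deriv]
  exact div_neg_of_pos_of_neg two_pos (sub_neg.2 (hlt t htT))

end RealLoewnerSolOn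

def rescale (f : ℝ → ℝ) (s : ℝ) : ℝ := exp (s / 2) * f (1 - exp (-s))

theorem one_sub_exp_neg_mem_Ico {s : ℝ} (hs : 0 ≤ s) : 1 - exp (-s) ∈ Ico 0 1 :=
  ⟨sub_nonneg.2 (exp_le_one_iff.2 (neg_nonpos.2 hs)), sub_lt_self _ (exp_pos _)⟩

theorem hasDerivAt_rescale {f : ℝ → ℝ} {d s : ℝ} (hf : HasDerivAt f d (1 - exp (-s))) :
    HasDerivAt (rescale f) (rescale f s / 2 + exp (-(s / 2)) * d) s := by
  have htime : HasDerivAt (fun v => 1 - exp (-v)) (exp (-s)) s := by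
    simpa using ((hasDerivAt_neg s).exp).const_sub 1
  have hscale : HasDerivAt (fun v => exp (v / 2)) (exp (s / 2) * (1 / 2)) s :=
    ((hasDerivAt_id s).div_const 2).exp.congr_deriv (by simp)
  have hexp : exp (s / 2) * exp (-s) = exp (-(s / 2)) := by rw [← exp_add]; ring_nf
  refine (hscale.mul (hf.comp s htime)).congr_deriv ?_
  simp only [rescale, Function.comp_apply]
  linear_combination d * hexp

theorem rescale_le_of_halfLipOn {lam : ℝ → ℝ} {C s : ℝ} (hLip : HalfLipOn lam (Icc 0 1) C)
    (hlam1 : lam 1 = 0) (hs : 0 ≤ s) : rescale lam s ≤ C := by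
  have ht := one_sub_exp_neg_mem_Ico hs
  have hlip := hLip 1 ⟨zero_le_one, le_rfl⟩ _ (Ico_subset_Icc_self ht)
  rw [hlam1, sub_zero, sub_sub_cancel_left, abs_neg, abs_of_pos (exp_pos _), ← exp_half] at hlip
  calc rescale lam s ≤ exp (s / 2) * (C * exp (-s / 2)) :=
        mul_le_mul_of_nonneg_left ((le_abs_self _).trans hlip) (exp_pos _).le
    _ = C := by rw [mul_left_comm, ← exp_add, show s / 2 + -s / 2 = 0 by ring, exp_zero, mul_one]

structure RescaledLoewnerFlow (X Λ : ℝ → ℝ) (C : ℝ) : Prop where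
  hasDerivAt : ∀ s > 0, HasDerivAt X (X s / 2 + 2 / (X s - Λ s)) s
  pos : ∀ s > 0, 0 < X s
  lt_driving : ∀ s > 0, X s < Λ s
  driving_le : ∀ s > 0, Λ s ≤ C

theorem RealLoewnerSolOn.rescaledLoewnerFlow {lam g : ℝ → ℝ} {x C : ℝ}
    (hg : RealLoewnerSolOn lam x g 1) (hLip : HalfLipOn lam (Icc 0 1) C) (hlam1 : lam 1 = 0)
    (hx : x < lam 0) (hcap : Tendsto g (𝓝[<] 1) (𝓝 0)) :
    RescaledLoewnerFlow (rescale g) (rescale lam) C := by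
  have hlt : ∀ t ∈ Ico 0 1, g t < lam t := fun t =>
    hg.lt_driving (hLip.continuousOn.mono Ico_subset_Icc_self) hx
  refine ⟨fun s hs => ?_, fun s hs => ?_, fun s hs => ?_, fun s hs => ?_⟩
  · have ht := one_sub_exp_neg_mem_Ico hs.le
    have htpos : 0 < 1 - exp (-s) := sub_pos.2 (exp_lt_one_iff.2 (neg_neg_of_pos hs))
    convert hasDerivAt_rescale ((hg.2 _ ht).2.hasDerivAt (Ici_mem_nhds htpos)) using 2
    rw [rescale, rescale, ← mul_sub, exp_neg (s / 2), inv_mul_eq_div, div_div,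
      mul_comm (g _ - lam _)]
  · exact mul_pos (exp_pos _)
      ((hg.strictAntiOn hlt).lt_of_tendsto_nhdsLT hcap (one_sub_exp_neg_mem_Ico hs.le))
  · exact mul_lt_mul_of_pos_left (hlt _ (one_sub_exp_neg_mem_Ico hs.le)) (exp_pos _)
  · exact rescale_le_of_halfLipOn hLip hlam1 hs.le

namespace RescaledLoewnerFlow

variable {X Λ : ℝ → ℝ} {C : ℝ}

theorem const_pos (h : RescaledLoewnerFlow X Λ C) : 0 < C :=
  (h.pos 1 one_pos).trans ((h.lt_driving 1 one_pos).trans_le (h.driving_le 1 one_pos))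

theorem drift_le (h : RescaledLoewnerFlow X Λ C) {s c : ℝ} (hs : 0 < s)
    (hc : 0 ≤ c ^ 2 - C * c + 4) (hcX : c ^ 2 - C * c + 4 ≤ X s ^ 2 - C * X s + 4) :
    X s / 2 + 2 / (X s - Λ s) ≤ -((c ^ 2 - C * c + 4) / (2 * C)) := by
  have hX := h.pos s hs
  have hXΛ := h.lt_driving s hs
  have hΛC := h.driving_le s hs
  have hCX : 0 < C - X s := by linarith
  calc X s / 2 + 2 / (X s - Λ s) ≤ X s / 2 - 2 / (C - X s) := by
        rw [← neg_sub, div_neg, ← sub_eq_add_neg]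
        gcongr
    _ = -((X s ^ 2 - C * X s + 4) / (2 * (C - X s))) := by field_simp; ring
    _ ≤ -((c ^ 2 - C * c + 4) / (2 * C)) :=
        neg_le_neg (div_le_div₀ (hc.trans hcX) hcX (by positivity) (by linarith))

theorem le_of_lower_root (h : RescaledLoewnerFlow X Λ C) {L : ℝ} (hL : L ≤ C / 2)
    (hPL : 0 ≤ L ^ 2 - C * L + 4) {s₀ : ℝ} (hs₀ : 0 < s₀) : L ≤ X s₀ := by
  by_contra! hXL
  set a := X s₀ with ha
  have hPa : 0 < a ^ 2 - C * a + 4 := by nlinarith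
  have hδ : 0 < (a ^ 2 - C * a + 4) / (2 * C) := div_pos hPa (by linarith [h.const_pos])
  have hderiv : ∀ s ≥ s₀, HasDerivAt X (X s / 2 + 2 / (X s - Λ s)) s :=
    fun s hs => h.hasDerivAt s (hs₀.trans_le hs)
  have hslope : ∀ s ≥ s₀, X s ≤ a →
      X s / 2 + 2 / (X s - Λ s) ≤ -((a ^ 2 - C * a + 4) / (2 * C)) :=
    fun s hs hXa => h.drift_le (hs₀.trans_le hs) hPa.le (by nlinarith)
  have hbelow : ∀ s ≥ s₀, X s ≤ a := fun s hs => by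
    simpa using le_add_mul_of_hasDerivAt_lt hderiv le_rfl (m := 0)
      (fun u hu hXu => (hslope u hu (by linarith)).trans_lt (by linarith)) hs
  obtain ⟨s, hs, hlt⟩ := exists_neg_lt_deriv_of_pos hδ hderiv
    (fun s hs => h.pos s (hs₀.trans_le hs))
  exact hlt.not_ge (hslope s hs (hbelow s hs))

theorem exists_forall_ge_le (h : RescaledLoewnerFlow X Λ C) {M : ℝ} (hM : C / 2 ≤ M)
    (hPM : 0 < M ^ 2 - C * M + 4) : ∃ S > 0, ∀ s ≥ S, X s ≤ M := by
  have hδ : 0 < (M ^ 2 - C * M + 4) / (2 * C) := div_pos hPM (by linarith [h.const_pos])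
  have hslope : ∀ s > 0, M ≤ X s →
      X s / 2 + 2 / (X s - Λ s) ≤ -((M ^ 2 - C * M + 4) / (2 * C)) :=
    fun s hs hMX => h.drift_le hs hPM.le (by nlinarith)
  have hderiv : ∀ s ≥ 1, HasDerivAt X (X s / 2 + 2 / (X s - Λ s)) s :=
    fun s hs => h.hasDerivAt s (one_pos.trans_le hs)
  obtain ⟨S, hS, hlt⟩ := exists_neg_lt_deriv_of_pos hδ hderiv
    (fun s hs => h.pos s (one_pos.trans_le hs))
  have hSM : X S ≤ M := by
    by_contra! hMS
    exact hlt.not_ge (hslope S (one_pos.trans_le hS) hMS.le)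
  refine ⟨S, one_pos.trans_le hS, fun s hs => ?_⟩
  simpa using le_add_mul_of_hasDerivAt_lt (fun u hu => hderiv u (hS.trans hu)) hSM (m := 0)
    (fun u hu hXu => (hslope u (one_pos.trans_le (hS.trans hu)) (by linarith)).trans_lt
      (by linarith)) hs

end RescaledLoewnerFlow

/-- (Lemma `interval` of the paper.)  If `‖lam‖_{1/2} ≤ 4 + 2ε`, `lam 1 = 0`,
and `x < lam 0` is captured by `lam` at time `1`, then the time-changed flow
`x_s = e^{s/2} g_{1-e^{-s}}(x)` eventually stays in the interval
`[L, L + 5√ε]`, where `L = 2 + ε - √(ε(ε+4))`. -/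
theorem captured_point_eventually_in_interval
    (ε : ℝ) (hε0 : 0 < ε) (hε : ε < 1 / 2)
    (lam : ℝ → ℝ) (hLip : HalfLipOn lam (Set.Icc 0 1) (4 + 2 * ε)) (hlam1 : lam 1 = 0)
    (x : ℝ) (hx : x < lam 0)
    (g : ℝ → ℝ) (hg : RealLoewnerSolOn lam x g 1)
    (hcap : Tendsto g (nhdsWithin 1 (Set.Iio 1)) (nhds 0)) :
    ∃ S₀ : ℝ, ∀ s : ℝ, S₀ ≤ s →
      Real.exp (s / 2) * g (1 - Real.exp (-s)) ∈
        Set.Icc (2 + ε - Real.sqrt (ε * (ε + 4)))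
          (2 + ε - Real.sqrt (ε * (ε + 4)) + 5 * Real.sqrt ε) := by
  have hflow := hg.rescaledLoewnerFlow hLip hlam1 hx hcap
  have hr := sq_sqrt (by positivity : 0 ≤ ε * (ε + 4))
  have he := sq_sqrt hε0.le
  have hroots : 2 * √(ε * (ε + 4)) < 5 * √ε :=
    lt_of_pow_lt_pow_left₀ 2 (by positivity) (by rw [mul_pow, mul_pow, hr, he]; nlinarith)
  have hr0 := sqrt_nonneg (ε * (ε + 4))
  obtain ⟨S, hS, hupper⟩ := hflow.exists_forall_ge_le (M := 2 + ε - √(ε * (ε + 4)) + 5 * √ε)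
    (by linarith) (by nlinarith [mul_pos (sqrt_pos.2 hε0) (sub_pos.2 hroots)])
  exact ⟨S, fun s hs =>
    ⟨hflow.le_of_lower_root (by linarith) (by nlinarith) (hS.trans_le hs), hupper s hs⟩⟩
end
end

section
/- Let 0 < ε < 1/2 and 0 < M < 4. Let λ : [0,1] → ℝ satisfy ‖λ‖_{1/2} ≤ 4 + 2ε and λ(1) = 0, and let x < λ(0) be a real number captured by λ at time 1, i.e. the real solution g_t(x) of ∂_t g_t(x) = 2/(g_t(x) − λ(t)), g_0(x) = x, exists for all t ∈ [0,1) and g_t(x) → 0 as t → 1⁻. Set σ(s) := e^{s/2} λ(1−e^{−s}). Then there exists a finite time S₀ such that whenever S₀ ≤ s₁ ≤ s₂ and σ(s) < M for all s ∈ [s₁, s₂], one has s₂ − s₁ ≤ 10√ε / (4 − M). -/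
open Set Filter Topology

noncomputable section

set_option maxHeartbeats 1000000 in
/-- (Lemma `tail` of the paper.)  If `‖lam‖_{1/2} ≤ 4 + 2ε`, `lam 1 = 0`, and
`x < lam 0` is captured by `lam` at time `1`, then there is `S₀ < ∞` such that the time-changed
driving function `σ(s) = e^{s/2} lam(1-e^{-s})` cannot stay below `M` on any subinterval of
`[S₀, ∞)` of length exceeding `10√ε / (4 - M)`. -/
theorem sigma_small_interval_bound
    (ε M : ℝ) (hε0 : 0 < ε) (hε : ε < 1 / 2) (hM0 : 0 < M) (hM : M < 4)
    (lam : ℝ → ℝ) (hLip : HalfLipOn lam (Set.Icc 0 1) (4 + 2 * ε)) (hlam1 : lam 1 = 0)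
    (x : ℝ) (hx : x < lam 0)
    (g : ℝ → ℝ) (hg : RealLoewnerSolOn lam x g 1)
    (hcap : Tendsto g (nhdsWithin 1 (Set.Iio 1)) (nhds 0)) :
    ∃ S₀ : ℝ, ∀ s₁ s₂ : ℝ, S₀ ≤ s₁ → s₁ ≤ s₂ →
      (∀ s ∈ Set.Icc s₁ s₂, Real.exp (s / 2) * lam (1 - Real.exp (-s)) < M) →
      s₂ - s₁ ≤ 10 * Real.sqrt ε / (4 - M) := by
  obtain ⟨hg0, hgde⟩ := hg
  set C : ℝ := 4 + 2 * ε with hCdef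
  have hC : 0 < C := by rw [hCdef]; linarith
  -- continuity of `lam` on `[0,1]`
  have hlamCont : ContinuousOn lam (Icc 0 1) := by
    intro a ha
    show Tendsto lam (nhdsWithin a (Icc 0 1)) (nhds (lam a))
    rw [tendsto_iff_dist_tendsto_zero]
    have h0 : Tendsto (fun t : ℝ => C * Real.sqrt |t - a|) (nhdsWithin a (Icc 0 1)) (nhds 0) := by
      have hc : ContinuousAt (fun t : ℝ => C * Real.sqrt |t - a|) a := by fun_prop
      have h : Tendsto (fun t : ℝ => C * Real.sqrt |t - a|) (nhdsWithin a (Icc 0 1))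
          (nhds (C * Real.sqrt |a - a|)) := hc.continuousWithinAt
      simpa using h
    refine squeeze_zero' (Eventually.of_forall fun t => dist_nonneg)
      (eventually_nhdsWithin_of_forall fun t ht => ?_) h0
    rw [Real.dist_eq]
    exact hLip a ha t ht
  -- `g` is below the driving function
  have hglt : ∀ t ∈ Ico (0 : ℝ) 1, g t < lam t := by
    intro t ht
    rcases lt_or_gt_of_ne (hgde t ht).1 with h | h
    · exact h
    · exfalso
      have ht0 : 0 < t := by
        rcases eq_or_lt_of_le ht.1 with he | hl
        · exfalso; rw [← he] at h; rw [hg0] at h; linarith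
        · exact hl
      have hcont : ContinuousOn (fun u => lam u - g u) (Icc 0 t) := by
        apply ContinuousOn.sub
        · exact hlamCont.mono (Icc_subset_Icc_right ht.2.le)
        · intro u hu
          exact ((hgde u ⟨hu.1, lt_of_le_of_lt hu.2 ht.2⟩).2.continuousWithinAt).mono
            (fun v hv => hv.1)
      obtain ⟨c, hc, hc0⟩ : ∃ c ∈ Icc 0 t, lam c - g c = 0 := by
        have h00 : (0:ℝ) ∈ Icc (lam t - g t) (lam 0 - g 0) := by
          constructor
          · linarith
          · rw [hg0]; linarith
        obtain ⟨c, hc, hceq⟩ := intermediate_value_Icc' ht0.le hcont h00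
        exact ⟨c, hc, hceq⟩
      exact (hgde c ⟨hc.1, lt_of_le_of_lt hc.2 ht.2⟩).1 (by linarith)
  -- `g` is strictly decreasing
  have hganti : ∀ t1 ∈ Ico (0 : ℝ) 1, ∀ t2 ∈ Ico (0 : ℝ) 1, t1 < t2 → g t2 < g t1 := by
    intro t1 ht1 t2 ht2 h12
    have hcont : ContinuousOn g (Icc t1 t2) := by
      intro u hu
      exact ((hgde u ⟨le_trans ht1.1 hu.1, lt_of_le_of_lt hu.2 ht2.2⟩).2.continuousWithinAt).mono
        (fun v hv => le_trans ht1.1 hv.1)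
    have hderiv : ∀ u ∈ interior (Icc t1 t2), deriv g u < 0 := by
      intro u hu
      rw [interior_Icc] at hu
      have hu0 : 0 < u := lt_of_le_of_lt ht1.1 hu.1
      have huI : u ∈ Ico (0 : ℝ) 1 := ⟨hu0.le, lt_trans hu.2 ht2.2⟩
      have hd : HasDerivAt g (2 / (g u - lam u)) u :=
        (hgde u huI).2.hasDerivAt (Ici_mem_nhds hu0)
      rw [hd.deriv]
      exact div_neg_of_pos_of_neg two_pos (by linarith [hglt u huI])
    exact strictAntiOn_of_deriv_neg (convex_Icc t1 t2) hcont hderiv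
      ⟨le_refl t1, h12.le⟩ ⟨h12.le, le_refl t2⟩ h12
  -- positivity of `g` (uses capture)
  have hgpos : ∀ t ∈ Ico (0 : ℝ) 1, 0 < g t := by
    have hgnn : ∀ t ∈ Ico (0 : ℝ) 1, 0 ≤ g t := by
      intro t ht
      have hev : ∀ᶠ b in nhdsWithin 1 (Iio 1), g b ≤ g t := by
        filter_upwards [Ioo_mem_nhdsLT_of_mem (⟨ht.2, le_refl 1⟩ : (1:ℝ) ∈ Ioc t 1)] with b hb
        exact (hganti t ht b ⟨le_trans ht.1 hb.1.le, hb.2⟩ hb.1).le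
      exact le_of_tendsto hcap hev
    intro t ht
    have hmid : (t + 1) / 2 ∈ Ico (0 : ℝ) 1 := ⟨by linarith [ht.1], by linarith [ht.2]⟩
    exact lt_of_le_of_lt (hgnn _ hmid) (hganti t ht _ hmid (by linarith [ht.2]))
  -- the rescaled functions
  set F : ℝ → ℝ := fun s => Real.exp (s / 2) * g (1 - Real.exp (-s)) with hFdef
  set Sg : ℝ → ℝ := fun s => Real.exp (s / 2) * lam (1 - Real.exp (-s)) with hSdef
  set F' : ℝ → ℝ := fun s => F s / 2 + 2 / (F s - Sg s) with hF'def
  -- key pointwise facts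
  have key : ∀ s : ℝ, 0 < s → 0 < F s ∧ F s < Sg s ∧ Sg s ≤ C ∧ HasDerivAt F (F' s) s := by
    intro s hs
    have hts0 : (0:ℝ) < 1 - Real.exp (-s) := by
      have : Real.exp (-s) < 1 := Real.exp_lt_one_iff.2 (by linarith)
      linarith
    have hts1 : 1 - Real.exp (-s) < 1 := by linarith [Real.exp_pos (-s)]
    have htI : 1 - Real.exp (-s) ∈ Ico (0:ℝ) 1 := ⟨hts0.le, hts1⟩
    have hgp := hgpos _ htI
    have hgl := hglt _ htI
    have hexp : (0:ℝ) < Real.exp (s / 2) := Real.exp_pos _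
    have hFval : F s = Real.exp (s / 2) * g (1 - Real.exp (-s)) := rfl
    have hSval : Sg s = Real.exp (s / 2) * lam (1 - Real.exp (-s)) := rfl
    refine ⟨by rw [hFval]; exact mul_pos hexp hgp,
      by rw [hFval, hSval]; exact mul_lt_mul_of_pos_left hgl hexp, ?_, ?_⟩
    · -- Sg s ≤ C
      have h1I : (1:ℝ) ∈ Icc (0:ℝ) 1 := ⟨zero_le_one, le_refl 1⟩
      have htI' : 1 - Real.exp (-s) ∈ Icc (0:ℝ) 1 := ⟨hts0.le, hts1.le⟩
      have hlb := hLip 1 h1I _ htI'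
      rw [hlam1, sub_zero] at hlb
      have habs : |1 - Real.exp (-s) - 1| = Real.exp (-s) := by
        rw [abs_of_nonpos (by linarith [Real.exp_pos (-s)])]; ring
      have hsqrt : Real.sqrt (Real.exp (-s)) = Real.exp (-(s / 2)) := by
        rw [show Real.exp (-s) = Real.exp (-(s / 2)) * Real.exp (-(s / 2)) by
          rw [← Real.exp_add]; congr 1; ring]
        exact Real.sqrt_mul_self (Real.exp_nonneg _)
      rw [habs, hsqrt] at hlb
      have hstep : Sg s ≤ Real.exp (s / 2) * (C * Real.exp (-(s / 2))) := by
        rw [hSval]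
        exact mul_le_mul_of_nonneg_left (le_trans (le_abs_self _) hlb) hexp.le
      have : Real.exp (s / 2) * (C * Real.exp (-(s / 2))) = C := by
        rw [mul_comm C, ← mul_assoc, ← Real.exp_add]
        norm_num
      linarith
    · -- derivative
      have hgd : HasDerivAt g (2 / (g (1 - Real.exp (-s)) - lam (1 - Real.exp (-s))))
          (1 - Real.exp (-s)) := (hgde _ htI).2.hasDerivAt (Ici_mem_nhds hts0)
      have htd : HasDerivAt (fun s : ℝ => 1 - Real.exp (-s)) (Real.exp (-s)) s := by
        have h1 : HasDerivAt (fun s : ℝ => Real.exp (-s)) (-Real.exp (-s)) s := by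
          simpa [Function.comp_def] using (Real.hasDerivAt_exp (-s)).comp s (hasDerivAt_neg s)
        exact ((hasDerivAt_const s (1:ℝ)).sub h1).congr_deriv (by ring)
      have hed : HasDerivAt (fun s : ℝ => Real.exp (s / 2)) (Real.exp (s / 2) / 2) s := by
        have := (Real.hasDerivAt_exp (s / 2)).comp s ((hasDerivAt_id s).div_const 2)
        simpa [div_eq_mul_inv, mul_comm, Function.comp_def] using this
      have hcomp : HasDerivAt (fun s : ℝ => g (1 - Real.exp (-s)))
          (2 / (g (1 - Real.exp (-s)) - lam (1 - Real.exp (-s))) * Real.exp (-s)) s :=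
        hgd.comp s htd
      have hprod := hed.mul hcomp
      have hne : g (1 - Real.exp (-s)) - lam (1 - Real.exp (-s)) ≠ 0 := by
        intro hcon; rw [sub_eq_zero] at hcon; exact (hgde _ htI).1 hcon
      have hne2 : Real.exp (s / 2) ≠ 0 := hexp.ne'
      have alg : ∀ E G L : ℝ, E ≠ 0 → G - L ≠ 0 →
          E * G / 2 + 2 / (E * G - E * L) = E / 2 * G + E * (2 / (G - L) * (E⁻¹ * E⁻¹)) := by
        intro E G L hE hGL
        rw [show E * G - E * L = E * (G - L) by ring]
        field_simp
      have hxs : Real.exp (-s) = (Real.exp (s / 2))⁻¹ * (Real.exp (s / 2))⁻¹ := by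
        rw [← Real.exp_neg, ← Real.exp_add]; congr 1; ring
      have hval : F' s = Real.exp (s / 2) / 2 * g (1 - Real.exp (-s)) +
          Real.exp (s / 2) * (2 / (g (1 - Real.exp (-s)) - lam (1 - Real.exp (-s))) *
            Real.exp (-s)) := by
        have hF's : F' s = F s / 2 + 2 / (F s - Sg s) := rfl
        calc F' s = Real.exp (s / 2) / 2 * g (1 - Real.exp (-s)) +
            Real.exp (s / 2) * (2 / (g (1 - Real.exp (-s)) - lam (1 - Real.exp (-s))) *
              ((Real.exp (s / 2))⁻¹ * (Real.exp (s / 2))⁻¹)) := by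
              rw [hF's, hFval, hSval]; exact alg _ _ _ hne2 hne
          _ = _ := by rw [← hxs]
      rw [hval]
      exact hprod
  -- inequality I5 : F' s ≤ Sg s / 2 - 2
  have I5 : ∀ s : ℝ, 0 < s → F' s ≤ Sg s / 2 - 2 := by
    intro s hs
    obtain ⟨h1, h2, h3, _⟩ := key s hs
    have hne : F s - Sg s ≠ 0 := by intro hcon; nlinarith
    have hne' : Sg s - F s ≠ 0 := by intro hcon; nlinarith
    have hid : Sg s / 2 - 2 - F' s = (Sg s - F s - 2) ^ 2 / (2 * (Sg s - F s)) := by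
      have hF's : F' s = F s / 2 + 2 / (F s - Sg s) := rfl
      rw [hF's]
      field_simp
      ring
    nlinarith [div_nonneg (sq_nonneg (Sg s - F s - 2)) (by linarith : (0:ℝ) ≤ 2 * (Sg s - F s)),
      hid]
  -- inequality I6 : quadratic decay
  have I6 : ∀ s κ : ℝ, 0 < s → 0 ≤ κ → κ ≤ (F s) ^ 2 - C * F s + 4 → F' s ≤ -(κ / (2 * C)) := by
    intro s κ hs hκ0 hκ
    obtain ⟨h1, h2, h3, _⟩ := key s hs
    have hu : 0 < Sg s - F s := by linarith
    have hne : F s - Sg s ≠ 0 := by intro hcon; nlinarith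
    have hne' : Sg s - F s ≠ 0 := hu.ne'
    have hid : F' s = -(((F s) ^ 2 - Sg s * F s + 4) / (2 * (Sg s - F s))) := by
      have hF's : F' s = F s / 2 + 2 / (F s - Sg s) := rfl
      rw [hF's]
      field_simp
      ring
    rw [hid]
    have hnum : κ ≤ (F s) ^ 2 - Sg s * F s + 4 := by nlinarith
    have hdiv : κ / (2 * C) ≤ ((F s) ^ 2 - Sg s * F s + 4) / (2 * (Sg s - F s)) := by
      apply div_le_div₀ (by linarith) hnum (by linarith) (by nlinarith)
    linarith
  -- numeric constants
  have hsε : 0 < Real.sqrt ε := Real.sqrt_pos.2 hε0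
  set d : ℝ := Real.sqrt (4 * ε + ε ^ 2) with hddef
  have hd0 : 0 < d := by rw [hddef]; exact Real.sqrt_pos.2 (by positivity)
  have hd2 : d ^ 2 = 4 * ε + ε ^ 2 := by rw [hddef]; exact Real.sq_sqrt (by positivity)
  have hdle : d ≤ 9 / 4 * Real.sqrt ε := by
    have h1 : d ≤ Real.sqrt (81 / 16 * ε) := by rw [hddef]; exact Real.sqrt_le_sqrt (by nlinarith)
    rwa [show (81 / 16 : ℝ) * ε = (9 / 4 : ℝ) ^ 2 * ε by norm_num,
      Real.sqrt_mul (by positivity) ε, Real.sqrt_sq (by norm_num)] at h1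
  set η : ℝ := Real.sqrt ε / 2 with hηdef
  have hη : 0 < η := by rw [hηdef]; positivity
  set rm : ℝ := 2 + ε - d with hrmdef
  set cB : ℝ := 2 + ε + d + η with hcBdef
  -- Lemma A : F s ≥ rm for all s > 0
  have hA : ∀ s : ℝ, 0 < s → rm ≤ F s := by
    intro s hs
    by_contra hcon
    push_neg at hcon
    have hFs : 0 < F s := (key s hs).1
    obtain ⟨c', hc'⟩ : ∃ y : ℝ, F s = y := ⟨_, rfl⟩
    rw [hc'] at hcon hFs
    obtain ⟨κ, hκdef⟩ : ∃ y : ℝ, y = c' ^ 2 - C * c' + 4 := ⟨_, rfl⟩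
    have hκpos : 0 < κ := by
      have hf1 : 0 < rm - c' := by linarith
      have hf2 : 0 < 2 + ε + d - c' := by linarith
      nlinarith [mul_pos hf1 hf2]
    obtain ⟨δ, hδdef⟩ : ∃ y : ℝ, y = κ / (2 * C) := ⟨_, rfl⟩
    have hδ : 0 < δ := by rw [hδdef]; exact div_pos hκpos (by linarith)
    obtain ⟨b, hbdef⟩ : ∃ y : ℝ, y = s + 2 * (c' + 1) / δ := ⟨_, rfl⟩
    have hsb : s ≤ b := by
      have h : 0 < 2 * (c' + 1) / δ := div_pos (by linarith) hδ
      linarith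
    have hball : ∀ y ∈ Icc s b, F y ≤ c' - δ / 2 * (y - s) := by
      refine image_le_of_deriv_right_lt_deriv_boundary (f := F) (f' := F')
        (B := fun y => c' - δ / 2 * (y - s)) (B' := fun _ => -(δ / 2))
        (fun y hy => ((key y (lt_of_lt_of_le hs hy.1)).2.2.2.continuousAt).continuousWithinAt)
        (fun y hy => ((key y (lt_of_lt_of_le hs hy.1)).2.2.2).hasDerivWithinAt)
        (by simp [hc']) (fun y => ?_) ?_
      · have : HasDerivAt (fun y : ℝ => c' - δ / 2 * (y - s)) (0 - δ / 2 * 1) y :=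
          (hasDerivAt_const y c').sub (((hasDerivAt_id y).sub_const s).const_mul (δ / 2))
        simpa using this
      · intro y hy heq
        have hy0 : 0 < y := lt_of_lt_of_le hs hy.1
        have hFy : F y ≤ c' := by
          have hge : 0 ≤ δ / 2 * (y - s) := mul_nonneg (by linarith) (by linarith [hy.1])
          rw [heq]; linarith
        have hFypos := (key y hy0).1
        have hκle : κ ≤ (F y) ^ 2 - C * F y + 4 := by
          have hfac : 0 ≤ (c' - F y) * (C - c' - F y) :=
            mul_nonneg (by linarith) (by linarith)
          nlinarith [hfac]
        have h6 := I6 y κ hy0 hκpos.le hκle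
        have : F' y ≤ -δ := by rw [hδdef]; exact h6
        linarith
    have hend := hball b ⟨hsb, le_refl b⟩
    have hbval : c' - δ / 2 * (b - s) = -1 := by
      rw [hbdef]; field_simp; ring
    have hFb := (key b (lt_of_lt_of_le hs hsb)).1
    rw [hbval] at hend
    linarith
  -- preliminary facts about cB
  have hκB0 : 0 < cB ^ 2 - C * cB + 4 := by
    rw [hcBdef, hCdef]
    nlinarith [hd2, mul_pos hd0 hη, sq_nonneg η]
  obtain ⟨κB, hκBdef⟩ : ∃ y : ℝ, y = cB ^ 2 - C * cB + 4 := ⟨_, rfl⟩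
  have hκB : 0 < κB := by rw [hκBdef]; exact hκB0
  obtain ⟨δB, hδBdef⟩ : ∃ y : ℝ, y = κB / (2 * C) := ⟨_, rfl⟩
  have hδB : 0 < δB := by rw [hδBdef]; exact div_pos hκB (by linarith)
  have hcB2 : 2 + ε ≤ cB := by linarith
  -- Lemma B (invariance): once F ≤ cB it stays ≤ cB
  have hBinv : ∀ a : ℝ, 1 ≤ a → F a ≤ cB → ∀ b : ℝ, a ≤ b → F b ≤ cB := by
    intro a ha hFa b hab
    have h0a : (0:ℝ) < a := lt_of_lt_of_le one_pos ha
    have hall : ∀ y ∈ Icc a b, F y ≤ cB := by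
      refine image_le_of_deriv_right_lt_deriv_boundary (f := F) (f' := F')
        (B := fun _ => cB) (B' := fun _ => (0:ℝ))
        (fun y hy => ((key y (lt_of_lt_of_le h0a hy.1)).2.2.2.continuousAt).continuousWithinAt)
        (fun y hy => ((key y (lt_of_lt_of_le h0a hy.1)).2.2.2).hasDerivWithinAt)
        hFa (fun y => hasDerivAt_const y cB) ?_
      intro y hy heq
      have hy0 : 0 < y := lt_of_lt_of_le h0a hy.1
      have hκle : κB ≤ (F y) ^ 2 - C * F y + 4 := by rw [heq, hκBdef]
      have h6 := I6 y κB hy0 hκB.le hκle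
      have : F' y ≤ -δB := by rw [hδBdef]; exact h6
      show F' y < (0:ℝ)
      linarith
    exact hall b ⟨hab, le_refl b⟩
  -- Lemma B (existence): F eventually goes below cB
  have hex : ∃ s₀ : ℝ, 1 ≤ s₀ ∧ F s₀ ≤ cB := by
    by_cases hc1 : F 1 ≤ cB
    · exact ⟨1, le_refl 1, hc1⟩
    · push_neg at hc1
      obtain ⟨b, hbdef⟩ : ∃ y : ℝ, y = 1 + (F 1 - cB) / (δB / 2) := ⟨_, rfl⟩
      have hb1 : 1 ≤ b := by
        have h : 0 < (F 1 - cB) / (δB / 2) := div_pos (by linarith) (by linarith)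
        linarith
      have hBb : F 1 - δB / 2 * (b - 1) = cB := by
        rw [hbdef]; field_simp; ring
      have hball : ∀ y ∈ Icc 1 b, F y ≤ F 1 - δB / 2 * (y - 1) := by
        refine image_le_of_deriv_right_lt_deriv_boundary (f := F) (f' := F')
          (B := fun y => F 1 - δB / 2 * (y - 1)) (B' := fun _ => -(δB / 2))
          (fun y hy => ((key y (lt_of_lt_of_le one_pos hy.1)).2.2.2.continuousAt).continuousWithinAt)
          (fun y hy => ((key y (lt_of_lt_of_le one_pos hy.1)).2.2.2).hasDerivWithinAt)
          (by simp) (fun y => ?_) ?_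
        · have : HasDerivAt (fun y : ℝ => F 1 - δB / 2 * (y - 1)) (0 - δB / 2 * 1) y :=
            (hasDerivAt_const y (F 1)).sub (((hasDerivAt_id y).sub_const 1).const_mul (δB / 2))
          simpa using this
        · intro y hy heq
          have hy0 : (0:ℝ) < y := lt_of_lt_of_le one_pos hy.1
          have hycB : cB < F y := by
            rw [heq]
            have hyb : y < b := hy.2
            nlinarith [hBb]
          have hκle : κB ≤ (F y) ^ 2 - C * F y + 4 := by
            have hfac : 0 ≤ (F y - cB) * (F y + cB - C) :=
              mul_nonneg (by linarith) (by linarith)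
            nlinarith [hfac]
          have h6 := I6 y κB hy0 hκB.le hκle
          have : F' y ≤ -δB := by rw [hδBdef]; exact h6
          linarith
      have hlast := hball b ⟨hb1, le_refl b⟩
      rw [hBb] at hlast
      exact ⟨b, hb1, hlast⟩
  -- main conclusion
  obtain ⟨s₀, hs₀1, hs₀F⟩ := hex
  refine ⟨s₀, ?_⟩
  intro s₁ s₂ h01 h12 hσM
  have h0s₁ : 0 < s₁ := lt_of_lt_of_le one_pos (le_trans hs₀1 h01)
  have hM4 : (0:ℝ) < 4 - M := by linarith
  have hball : ∀ y ∈ Icc s₁ s₂, F y ≤ F s₁ - (4 - M) / 2 * (y - s₁) := by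
    refine image_le_of_deriv_right_lt_deriv_boundary (f := F) (f' := F')
      (B := fun y => F s₁ - (4 - M) / 2 * (y - s₁)) (B' := fun _ => -((4 - M) / 2))
      (fun y hy => ((key y (lt_of_lt_of_le h0s₁ hy.1)).2.2.2.continuousAt).continuousWithinAt)
      (fun y hy => ((key y (lt_of_lt_of_le h0s₁ hy.1)).2.2.2).hasDerivWithinAt)
      (by simp) (fun y => ?_) ?_
    · have : HasDerivAt (fun y : ℝ => F s₁ - (4 - M) / 2 * (y - s₁)) (0 - (4 - M) / 2 * 1) y :=
        (hasDerivAt_const y (F s₁)).sub (((hasDerivAt_id y).sub_const s₁).const_mul ((4 - M) / 2))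
      simpa using this
    · intro y hy _
      have hy0 : 0 < y := lt_of_lt_of_le h0s₁ hy.1
      have hσ : Sg y < M := by
        have := hσM y ⟨hy.1, hy.2.le⟩
        rw [hSdef]
        simpa using this
      have h5 := I5 y hy0
      linarith
  have h2 := hball s₂ ⟨h12, le_refl _⟩
  have h3 : rm ≤ F s₂ := hA s₂ (lt_of_lt_of_le h0s₁ h12)
  have h4 : F s₁ ≤ cB := hBinv s₀ hs₀1 hs₀F s₁ h01
  have h5 : (4 - M) / 2 * (s₂ - s₁) ≤ 2 * d + η := by
    have : F s₂ ≤ F s₁ - (4 - M) / 2 * (s₂ - s₁) := h2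
    linarith
  have h6 : (4 - M) * (s₂ - s₁) ≤ 10 * Real.sqrt ε := by
    have h7 : 2 * (2 * d + η) ≤ 10 * Real.sqrt ε := by
      rw [hηdef] at *
      linarith [hdle]
    linarith
  rw [le_div_iff₀ hM4]
  linarith
end
end

section
/- Let 0 ≤ a < b ≤ c, let C > 0, and let λ : [0,c] → ℝ be a function such that |λ(t) − λ(s)| ≤ C√(t−s) for all 0 ≤ s ≤ t ≤ a, λ is constant on [a,b], |λ(t) − λ(s)| ≤ C√(t−s) for all b ≤ s ≤ t ≤ c, and 4a(c − b) ≤ (b − a)². Then |λ(t) − λ(s)| ≤ C√(t−s) for all 0 ≤ s ≤ t ≤ c, i.e. ‖λ‖_{1/2} ≤ C on [0,c]. -/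
open Set

/-! Since `λ` is constant on `[a, b]`, every pair `s ≤ t` not straddling the whole gap reduces
to one of the two given bounds. For `s < a < b < t` the increments over `[s, a]` and `[b, t]`
add up, and `4a(c - b) ≤ (b - a)²` gives `2√((a - s)(t - b)) ≤ b - a`, which is exactly
`√(a - s) + √(t - b) ≤ √(t - s)`. -/

def HalfLipOnWith (C : ℝ) (f : ℝ → ℝ) (S : Set ℝ) : Prop :=
  ∀ s ∈ S, ∀ t ∈ S, s ≤ t → |f t - f s| ≤ C * √(t - s)

theorem Real.sqrt_add_sqrt_le_sqrt_add_add {x y d : ℝ} (hx : 0 ≤ x) (hy : 0 ≤ y) (hd : 0 ≤ d)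
    (h : 4 * x * y ≤ d ^ 2) : √x + √y ≤ √(x + y + d) := by
  have hcross : 2 * (√x * √y) ≤ d := by
    refine (pow_le_pow_iff_left₀ (by positivity) hd two_ne_zero).mp ?_
    rw [mul_pow, mul_pow, Real.sq_sqrt hx, Real.sq_sqrt hy]
    linarith
  refine Real.le_sqrt_of_sq_le ?_
  rw [add_sq, Real.sq_sqrt hx, Real.sq_sqrt hy]
  linarith

section HalfLip

variable {C a b : ℝ} {f : ℝ → ℝ}

theorem HalfLipOnWith.extend_const_right {p : ℝ} (hC : 0 ≤ C)
    (hf : HalfLipOnWith C f (Icc p a)) (hconst : ∀ x ∈ Icc a b, f x = f a) :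
    HalfLipOnWith C f (Icc p b) := by
  intro s hs t ht hst
  rcases le_or_gt t a with hta | hat
  · exact hf s ⟨hs.1, hst.trans hta⟩ t ⟨hs.1.trans hst, hta⟩ hst
  rw [hconst t ⟨hat.le, ht.2⟩]
  rcases le_or_gt a s with has | hsa
  · rw [hconst s ⟨has, hs.2⟩, sub_self, abs_zero]
    positivity
  · calc |f a - f s| ≤ C * √(a - s) := hf s ⟨hs.1, hsa.le⟩ a ⟨hs.1.trans hsa.le, le_rfl⟩ hsa.le
      _ ≤ C * √(t - s) := by gcongr

theorem HalfLipOnWith.extend_const_left {q : ℝ} (hC : 0 ≤ C) (hab : a ≤ b)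
    (hf : HalfLipOnWith C f (Icc b q)) (hconst : ∀ x ∈ Icc a b, f x = f a) :
    HalfLipOnWith C f (Icc a q) := by
  intro s hs t ht hst
  rcases le_or_gt b s with hbs | hsb
  · exact hf s ⟨hbs, hs.2⟩ t ⟨hbs.trans hst, ht.2⟩ hst
  have hfb : f b = f a := hconst b ⟨hab, le_rfl⟩
  rw [hconst s ⟨hs.1, hsb.le⟩, ← hfb]
  rcases le_or_gt t b with htb | hbt
  · rw [hconst t ⟨hs.1.trans hst, htb⟩, hfb, sub_self, abs_zero]
    positivity
  · calc |f t - f b| ≤ C * √(t - b) := hf b ⟨le_rfl, hbt.le.trans ht.2⟩ t ⟨hbt.le, ht.2⟩ hbt.le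
      _ ≤ C * √(t - s) := by gcongr

theorem abs_sub_le_of_const_gap {s t : ℝ} (hC : 0 ≤ C) (hsa : s ≤ a) (hab : a ≤ b)
    (hbt : b ≤ t) (hgap : 4 * (a - s) * (t - b) ≤ (b - a) ^ 2) (hfab : f b = f a)
    (hs : |f a - f s| ≤ C * √(a - s)) (ht : |f t - f b| ≤ C * √(t - b)) :
    |f t - f s| ≤ C * √(t - s) := by
  have hsqrt : √(a - s) + √(t - b) ≤ √(t - s) := by
    have := Real.sqrt_add_sqrt_le_sqrt_add_add (sub_nonneg.2 hsa) (sub_nonneg.2 hbt)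
      (sub_nonneg.2 hab) hgap
    rwa [show a - s + (t - b) + (b - a) = t - s by ring] at this
  calc |f t - f s| = |(f a - f s) + (f t - f b)| := by rw [hfab]; ring_nf
    _ ≤ |f a - f s| + |f t - f b| := abs_add_le _ _
    _ ≤ C * √(a - s) + C * √(t - b) := add_le_add hs ht
    _ = C * (√(a - s) + √(t - b)) := by ring
    _ ≤ C * √(t - s) := mul_le_mul_of_nonneg_left hsqrt hC

end HalfLip

theorem halflip_concat_general (a b c C : ℝ) (hab : a < b) (hC : 0 < C)
    (lam : ℝ → ℝ)
    (h1 : ∀ s t : ℝ, 0 ≤ s → s ≤ t → t ≤ a → |lam t - lam s| ≤ C * Real.sqrt (t - s))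
    (h2 : ∀ s ∈ Set.Icc a b, lam s = lam a)
    (h3 : ∀ s t : ℝ, b ≤ s → s ≤ t → t ≤ c → |lam t - lam s| ≤ C * Real.sqrt (t - s))
    (h4 : 4 * a * (c - b) ≤ (b - a) ^ 2) :
    ∀ s t : ℝ, 0 ≤ s → s ≤ t → t ≤ c → |lam t - lam s| ≤ C * Real.sqrt (t - s) := by
  have hleft : HalfLipOnWith C lam (Icc 0 b) :=
    HalfLipOnWith.extend_const_right hC.le (fun s hs t ht hst => h1 s t hs.1 hst ht.2) h2
  have hright : HalfLipOnWith C lam (Icc a c) :=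
    HalfLipOnWith.extend_const_left hC.le hab.le (fun s hs t ht hst => h3 s t hs.1 hst ht.2) h2
  intro s t hs hst htc
  rcases le_or_gt t b with htb | hbt
  · exact hleft s ⟨hs, hst.trans htb⟩ t ⟨hs.trans hst, htb⟩ hst
  rcases le_or_gt a s with has | hsa
  · exact hright s ⟨has, hst.trans htc⟩ t ⟨has.trans hst, htc⟩ hst
  have hgap : 4 * (a - s) * (t - b) ≤ (b - a) ^ 2 := by
    have : (a - s) * (t - b) ≤ a * (c - b) :=
      mul_le_mul (by linarith) (by linarith) (by linarith) (by linarith)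
    linarith
  exact abs_sub_le_of_const_gap hC.le hsa.le hab.le hbt.le hgap (h2 b ⟨hab.le, le_rfl⟩)
    (h1 s a hs hsa.le le_rfl) (h3 b t le_rfl hbt.le htc)

/-- (Concatenation step in the construction of Proposition
`counterexpl`.)  If `lam` satisfies the Lip(1/2) bound with constant `C` on `[0,a]` and on
`[b,c]`, is constant on `[a,b]`, and `4a(c-b) ≤ (b-a)²`, then `lam` satisfies the Lip(1/2)
bound with constant `C` on all of `[0,c]`. -/
theorem halflip_concat (a b c C : ℝ) (ha : 0 ≤ a) (hab : a < b) (hbc : b ≤ c) (hC : 0 < C)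
    (lam : ℝ → ℝ)
    (h1 : ∀ s t : ℝ, 0 ≤ s → s ≤ t → t ≤ a → |lam t - lam s| ≤ C * Real.sqrt (t - s))
    (h2 : ∀ s ∈ Set.Icc a b, lam s = lam a)
    (h3 : ∀ s t : ℝ, b ≤ s → s ≤ t → t ≤ c → |lam t - lam s| ≤ C * Real.sqrt (t - s))
    (h4 : 4 * a * (c - b) ≤ (b - a) ^ 2) :
    ∀ s t : ℝ, 0 ≤ s → s ≤ t → t ≤ c → |lam t - lam s| ≤ C * Real.sqrt (t - s) :=
  halflip_concat_general a b c C hab hC lam h1 h2 h3 h4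
end

section
/- Let C > 4, let λ(t) = C√(1−t) for t ∈ [0,1], and set A = (C + √(C² − 16))/2. Then every real x ∈ [A, C) is captured by λ at time 1: the real solution g_t(x) of ∂_t g_t(x) = 2/(g_t(x) − λ(t)), g_0(x) = x, exists for all t ∈ [0,1) and g_t(x) − λ(t) → 0 as t → 1⁻. Moreover x_s := e^{s/2} g_{1−e^{−s}}(x) is nonincreasing in s and x_s → A as s → ∞. -/
open Set Filter Topology

noncomputable section

/-!
Under the time change `x_s = e^{s/2} g_{1-e^{-s}}(x)` the Loewner equation driven by `C√(1-t)`
becomes the autonomous equation `ẋ = x/2 + 2/(x - C) = (x - A)(x - B)/(2(x - C))`, whose rest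
points are the roots `A > B > 0` of `y² - Cy + 4`. The field is negative on `(A, C)`, so the
flow decreases towards `A`. Separating variables, `Ψ(y) = (2B log(y - A) - 2A log(y - B))/(A - B)`
increases on `(A, C]` and tends to `-∞` at `A`, so `x_s = Ψ⁻¹(Ψ(x) - s)` exists for all `s ≥ 0`
and tends to `A`. Back in the original time, `|g_t - λ(t)| = √(1-t) |x_s - C| ≤ (C - A)√(1-t)`.
-/

section InverseFunction

variable {f : ℝ → ℝ} {s t : Set ℝ}

lemma StrictMonoOn.image_Ioo_eq_Iio {a b : ℝ} (hf : StrictMonoOn f (Ioc a b))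
    (hcont : ContinuousOn f (Ioc a b)) (hbot : Tendsto f (𝓝[>] a) atBot) (hab : a < b) :
    f '' Ioo a b = Iio (f b) := by
  refine Subset.antisymm ?_ fun v hv => ?_
  · rintro _ ⟨y, hy, rfl⟩
    exact hf (Ioo_subset_Ioc_self hy) (right_mem_Ioc.2 hab) hy.2
  obtain ⟨y₀, hy₀v, hy₀⟩ := ((hbot.eventually_le_atBot v).and (Ioo_mem_nhdsGT hab)).exists
  have hsub : Icc y₀ b ⊆ Ioc a b := Icc_subset_Ioc hy₀.1 le_rfl
  obtain ⟨y, hy, rfl⟩ := intermediate_value_Ico hy₀.2.le (hcont.mono hsub) ⟨hy₀v, hv⟩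
  exact ⟨y, ⟨hy₀.1.trans_le hy.1, hy.2⟩, rfl⟩

lemma StrictMonoOn.strictMonoOn_invFunOn (hf : StrictMonoOn f s) (hst : f '' s = t) :
    StrictMonoOn (Function.invFunOn f s) t := by
  have hsurj : SurjOn f s t := hst ▸ surjOn_image f s
  intro v hv w hw hvw
  rw [← hf.lt_iff_lt (hsurj.mapsTo_invFunOn hv) (hsurj.mapsTo_invFunOn hw),
    hsurj.rightInvOn_invFunOn hv, hsurj.rightInvOn_invFunOn hw]
  exact hvw

lemma StrictMonoOn.continuousAt_invFunOn (hf : StrictMonoOn f s) (hst : f '' s = t)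
    (hs : IsOpen s) (ht : IsOpen t) {v : ℝ} (hv : v ∈ t) :
    ContinuousAt (Function.invFunOn f s) v := by
  have hsurj : SurjOn f s t := hst ▸ surjOn_image f s
  have himage : Function.invFunOn f s '' t = s := by
    rw [← hst, hf.injOn.leftInvOn_invFunOn.image_image]
  refine (hf.strictMonoOn_invFunOn hst).continuousAt_of_image_mem_nhds (ht.mem_nhds hv) ?_
  rw [himage]
  exact hs.mem_nhds (hsurj.mapsTo_invFunOn hv)

lemma StrictMonoOn.hasDerivAt_invFunOn (hf : StrictMonoOn f s) (hst : f '' s = t)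
    (hs : IsOpen s) (ht : IsOpen t) {v f' : ℝ} (hv : v ∈ t)
    (hderiv : HasDerivAt f f' (Function.invFunOn f s v)) (hf' : f' ≠ 0) :
    HasDerivAt (Function.invFunOn f s) f'⁻¹ v := by
  have hsurj : SurjOn f s t := hst ▸ surjOn_image f s
  refine hderiv.of_local_left_inverse (hf.continuousAt_invFunOn hst hs ht hv) hf' ?_
  filter_upwards [ht.mem_nhds hv] with w hw using hsurj.rightInvOn_invFunOn hw

end InverseFunction

section FirstIntegral

variable {A B : ℝ}

def firstIntegral (A B y : ℝ) : ℝ :=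
  (2 * B * Real.log (y - A) - 2 * A * Real.log (y - B)) / (A - B)

lemma hasDerivAt_firstIntegral (hBA : B < A) {y : ℝ} (hy : A < y) :
    HasDerivAt (firstIntegral A B) (2 * (A + B - y) / ((y - A) * (y - B))) y := by
  have hyA : y - A ≠ 0 := (sub_pos.2 hy).ne'
  have hyB : y - B ≠ 0 := (sub_pos.2 (hBA.trans hy)).ne'
  have hAB : A - B ≠ 0 := (sub_pos.2 hBA).ne'
  have hlog (c : ℝ) (hc : y - c ≠ 0) : HasDerivAt (fun y => Real.log (y - c)) (y - c)⁻¹ y := by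
    simpa using ((hasDerivAt_id y).sub_const c).log hc
  exact (((hlog A hyA).const_mul (2 * B)).sub ((hlog B hyB).const_mul (2 * A))).div_const
    (A - B) |>.congr_deriv (by field_simp; ring)

lemma strictMonoOn_firstIntegral (hBA : B < A) :
    StrictMonoOn (firstIntegral A B) (Ioc A (A + B)) := by
  have hderiv : ∀ y ∈ Ioc A (A + B), HasDerivAt (firstIntegral A B)
      (2 * (A + B - y) / ((y - A) * (y - B))) y := fun y hy => hasDerivAt_firstIntegral hBA hy.1
  refine strictMonoOn_of_deriv_pos (convex_Ioc _ _)
    (fun y hy => (hderiv y hy).continuousAt.continuousWithinAt) fun y hy => ?_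
  rw [interior_Ioc] at hy
  rw [(hderiv y (Ioo_subset_Ioc_self hy)).deriv]
  have : 0 < y - A := sub_pos.2 hy.1
  have : 0 < y - B := by linarith [hy.1]
  have : 0 < A + B - y := by linarith [hy.2]
  positivity

lemma tendsto_firstIntegral_nhdsGT (hB : 0 < B) (hBA : B < A) :
    Tendsto (firstIntegral A B) (𝓝[>] A) atBot := by
  have hAB : 0 < A - B := sub_pos.2 hBA
  have hlogA : Tendsto (fun y => Real.log (y - A)) (𝓝[>] A) atBot := by
    refine Real.tendsto_log_nhdsGT_zero.comp ?_
    refine tendsto_nhdsWithin_iff.2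
      ⟨?_, eventually_mem_nhdsWithin.mono fun y hy => sub_pos.2 (mem_Ioi.1 hy)⟩
    exact ((continuous_sub_right A).tendsto' A 0 (sub_self A)).mono_left nhdsWithin_le_nhds
  have hlogB :
      Tendsto (fun y => 2 * A * Real.log (y - B)) (𝓝[>] A) (𝓝 (2 * A * Real.log (A - B))) :=
    ((continuousAt_id.sub continuousAt_const).log hAB.ne' |>.const_mul _).tendsto.mono_left
      nhdsWithin_le_nhds
  exact (((hlogA.const_mul_atBot (by positivity : 0 < 2 * B)).atBot_add
    (hlogB.neg)).atBot_div_const hAB).congr fun y => by simp [firstIntegral, sub_eq_add_neg]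

lemma exists_strictAntiOn_flow (hB : 0 < B) (hBA : B < A) {x : ℝ} (hx : x ∈ Ioo A (A + B)) :
    ∃ X : ℝ → ℝ, X 0 = x ∧ (∀ s ≥ 0, X s ∈ Ioo A (A + B)) ∧
      (∀ s ≥ 0, HasDerivAt X ((X s - A) * (X s - B) / (2 * (X s - (A + B)))) s) ∧
      StrictAntiOn X (Ici 0) ∧ Tendsto X atTop (𝓝 A) := by
  set Ψ := firstIntegral A B
  have hmono : StrictMonoOn Ψ (Ioo A (A + B)) :=
    (strictMonoOn_firstIntegral hBA).mono Ioo_subset_Ioc_self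
  have himage : Ψ '' Ioo A (A + B) = Iio (Ψ (A + B)) :=
    (strictMonoOn_firstIntegral hBA).image_Ioo_eq_Iio
      (fun y hy => (hasDerivAt_firstIntegral hBA hy.1).continuousAt.continuousWithinAt)
      (tendsto_firstIntegral_nhdsGT hB hBA) (by linarith)
  have hsurj : SurjOn Ψ (Ioo A (A + B)) (Iio (Ψ (A + B))) := himage ▸ surjOn_image _ _
  have hinv_mono := hmono.strictMonoOn_invFunOn himage
  have hΨ_mem {y : ℝ} (hy : y ∈ Ioo A (A + B)) : Ψ y ∈ Iio (Ψ (A + B)) :=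
    himage ▸ mem_image_of_mem Ψ hy
  have hleft {y : ℝ} (hy : y ∈ Ioo A (A + B)) : Function.invFunOn Ψ (Ioo A (A + B)) (Ψ y) = y :=
    hmono.injOn.leftInvOn_invFunOn hy
  have hmem {s : ℝ} (hs : 0 ≤ s) : Ψ x - s ∈ Iio (Ψ (A + B)) :=
    (sub_le_self _ hs).trans_lt (hΨ_mem hx)
  refine ⟨fun s => Function.invFunOn Ψ (Ioo A (A + B)) (Ψ x - s), by simp [hleft hx],
    fun s hs => hsurj.mapsTo_invFunOn (hmem hs), fun s hs => ?_,
    fun s hs s' hs' hss' => hinv_mono (hmem hs') (hmem hs) (by linarith), ?_⟩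
  · set y := Function.invFunOn Ψ (Ioo A (A + B)) (Ψ x - s)
    have hy : y ∈ Ioo A (A + B) := hsurj.mapsTo_invFunOn (hmem hs)
    have hyA : 0 < y - A := sub_pos.2 hy.1
    have hyB : 0 < y - B := by linarith [hy.1]
    have hyC : 0 < A + B - y := by linarith [hy.2]
    have hinv := hmono.hasDerivAt_invFunOn himage isOpen_Ioo isOpen_Iio (hmem hs)
      (hasDerivAt_firstIntegral hBA hy.1) (by positivity)
    refine (hinv.comp s ((hasDerivAt_id s).const_sub _)).congr_deriv ?_
    change (2 * (A + B - y) / ((y - A) * (y - B)))⁻¹ * -1 =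
      (y - A) * (y - B) / (2 * (y - (A + B)))
    rw [show y - (A + B) = -(A + B - y) by ring]
    field_simp
  · refine tendsto_order.2 ⟨fun a ha => (eventually_ge_atTop 0).mono fun s hs =>
      ha.trans (hsurj.mapsTo_invFunOn (hmem hs)).1, fun a ha => ?_⟩
    have hy : min a x ∈ Ioo A (A + B) := ⟨lt_min ha hx.1, (min_le_right a x).trans_lt hx.2⟩
    filter_upwards [eventually_gt_atTop (Ψ x - Ψ (min a x)), eventually_ge_atTop 0] with s hs hs₀
    calc Function.invFunOn Ψ (Ioo A (A + B)) (Ψ x - s)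
        < Function.invFunOn Ψ (Ioo A (A + B)) (Ψ (min a x)) :=
          hinv_mono (hmem hs₀) (hΨ_mem hy) (by linarith)
      _ ≤ a := (hleft hy).trans_le (min_le_left a x)

end FirstIntegral

section TimeChange

variable {lam σ X : ℝ → ℝ}

/-- Inverse of the time change `x_s = e^{s/2} g(1 - e^{-s})`. -/
def fromRescaled (X : ℝ → ℝ) (t : ℝ) : ℝ :=
  √(1 - t) * X (-Real.log (1 - t))

lemma exp_half_mul_fromRescaled (X : ℝ → ℝ) (s : ℝ) :
    Real.exp (s / 2) * fromRescaled X (1 - Real.exp (-s)) = X s := by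
  rw [fromRescaled, sub_sub_cancel, Real.log_exp, neg_neg, ← Real.exp_half, ← mul_assoc,
    ← Real.exp_add, neg_div, add_neg_cancel, Real.exp_zero, one_mul]

lemma neg_log_one_sub_nonneg {t : ℝ} (ht₀ : 0 ≤ t) (ht₁ : t < 1) : 0 ≤ -Real.log (1 - t) :=
  neg_nonneg.2 (Real.log_nonpos (by linarith) (by linarith))

lemma fromRescaled_sub_eq (hlam : ∀ t < 1, lam t = √(1 - t) * σ (-Real.log (1 - t)))
    {t : ℝ} (ht : t < 1) :
    fromRescaled X t - lam t = √(1 - t) * (X (-Real.log (1 - t)) - σ (-Real.log (1 - t))) := by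
  rw [fromRescaled, hlam t ht, mul_sub]

lemma realLoewnerSolOn_fromRescaled (hlam : ∀ t < 1, lam t = √(1 - t) * σ (-Real.log (1 - t)))
    {x : ℝ} (hX₀ : X 0 = x) (hne : ∀ s ≥ 0, X s ≠ σ s)
    (hX : ∀ s ≥ 0, HasDerivAt X (X s / 2 + 2 / (X s - σ s)) s) :
    RealLoewnerSolOn lam x (fromRescaled X) 1 := by
  refine ⟨by simp [fromRescaled, hX₀], fun t ⟨ht₀, ht₁⟩ => ?_⟩
  have h1t : 0 < 1 - t := by linarith
  have hs := neg_log_one_sub_nonneg ht₀ ht₁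
  have hr : 0 < √(1 - t) := Real.sqrt_pos.2 h1t
  have hgap : X (-Real.log (1 - t)) - σ (-Real.log (1 - t)) ≠ 0 := sub_ne_zero.2 (hne _ hs)
  have hsub := fromRescaled_sub_eq (X := X) hlam ht₁
  refine ⟨sub_ne_zero.1 (hsub ▸ mul_ne_zero hr.ne' hgap), ?_⟩
  have hsqrt := ((hasDerivAt_id t).const_sub 1).sqrt h1t.ne'
  have hlog := (((hasDerivAt_id t).const_sub 1).log h1t.ne').neg
  refine (hsqrt.mul ((hX _ hs).comp t hlog)).hasDerivWithinAt.congr_deriv ?_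
  rw [hsub]
  have hr2 : √(1 - t) ^ 2 = 1 - t := Real.sq_sqrt h1t.le
  simp only [id, Function.comp_apply, Pi.neg_apply]
  field_simp
  rw [hr2]
  ring

lemma tendsto_fromRescaled_sub (hlam : ∀ t < 1, lam t = √(1 - t) * σ (-Real.log (1 - t)))
    {M : ℝ} (hM : ∀ s ≥ 0, |X s - σ s| ≤ M) :
    Tendsto (fun t => fromRescaled X t - lam t) (𝓝[<] 1) (𝓝 0) := by
  have hbound : Tendsto (fun t : ℝ => M * √(1 - t)) (𝓝[<] 1) (𝓝 0) := by
    have hcont : Continuous fun t : ℝ => M * √(1 - t) := by fun_prop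
    simpa using (hcont.tendsto 1).mono_left nhdsWithin_le_nhds
  refine squeeze_zero_norm' ?_ hbound
  filter_upwards [Ioo_mem_nhdsLT zero_lt_one] with t ⟨ht₀, ht₁⟩
  rw [fromRescaled_sub_eq hlam ht₁, norm_mul, Real.norm_of_nonneg (Real.sqrt_nonneg _), mul_comm]
  exact mul_le_mul_of_nonneg_right (hM _ (neg_log_one_sub_nonneg ht₀.le ht₁)) (Real.sqrt_nonneg _)

end TimeChange

lemma exists_rescaled_solution {A B C x : ℝ} (hB : 0 < B) (hBA : B < A) (hsum : A + B = C)
    (hprod : A * B = 4) (hx : x ∈ Ico A C) :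
    ∃ X : ℝ → ℝ, X 0 = x ∧ (∀ s ≥ 0, X s ∈ Ico A C) ∧
      (∀ s ≥ 0, HasDerivAt X (X s / 2 + 2 / (X s - C)) s) ∧
      AntitoneOn X (Ici 0) ∧ Tendsto X atTop (𝓝 A) := by
  subst hsum
  rcases hx.1.eq_or_lt with rfl | hxA
  · refine ⟨fun _ => A, rfl, fun _ _ => hx, fun s _ => (hasDerivAt_const s A).congr_deriv ?_,
      antitoneOn_const, tendsto_const_nhds⟩
    rw [show A - (A + B) = -B by ring]
    field_simp
    linear_combination -hprod
  obtain ⟨X, hX₀, hX_mem, hX_deriv, hX_anti, hX_lim⟩ :=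
    exists_strictAntiOn_flow hB hBA ⟨hxA, hx.2⟩
  refine ⟨X, hX₀, fun s hs => Ioo_subset_Ico_self (hX_mem s hs),
    fun s hs => (hX_deriv s hs).congr_deriv ?_, hX_anti.antitoneOn, hX_lim⟩
  have : X s - (A + B) ≠ 0 := sub_ne_zero.2 (hX_mem s hs).2.ne
  field_simp
  linear_combination hprod

lemma exists_conj_root_of_four_lt {C : ℝ} (hC : 4 < C) :
    ∃ B, 0 < B ∧ B < (C + √(C ^ 2 - 16)) / 2 ∧ (C + √(C ^ 2 - 16)) / 2 + B = C ∧
      (C + √(C ^ 2 - 16)) / 2 * B = 4 := by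
  have h16 : 0 < C ^ 2 - 16 := by nlinarith
  have hsq := Real.sq_sqrt h16.le
  have hpos := Real.sqrt_pos.2 h16
  have hlt : √(C ^ 2 - 16) < C := by nlinarith
  exact ⟨(C - √(C ^ 2 - 16)) / 2, by linarith, by linarith, by ring,
    by linear_combination (-1 / 4 : ℝ) * hsq⟩

/-- For the driving function `lam(t) = C√(1-t)` with `C > 4`, every real
point `x ∈ [A, C)`, where `A = (C + √(C²-16))/2`, is captured at time `1`; moreover the
time-changed flow `x_s = e^{s/2} g_{1-e^{-s}}(x)` is nonincreasing and converges to `A`. -/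
theorem capture_for_constant_sigma (C : ℝ) (hC : 4 < C) (x : ℝ)
    (hx : x ∈ Set.Ico ((C + Real.sqrt (C ^ 2 - 16)) / 2) C) :
    ∃ g : ℝ → ℝ,
      RealLoewnerSolOn (fun t => C * Real.sqrt (1 - t)) x g 1 ∧
      Tendsto (fun t => g t - C * Real.sqrt (1 - t)) (nhdsWithin 1 (Set.Iio 1)) (nhds 0) ∧
      AntitoneOn (fun s => Real.exp (s / 2) * g (1 - Real.exp (-s))) (Set.Ici 0) ∧
      Tendsto (fun s => Real.exp (s / 2) * g (1 - Real.exp (-s))) atTop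
        (nhds ((C + Real.sqrt (C ^ 2 - 16)) / 2)) := by
  obtain ⟨B, hB, hBA, hsum, hprod⟩ := exists_conj_root_of_four_lt hC
  obtain ⟨X, hX₀, hX_mem, hX_deriv, hX_anti, hX_lim⟩ :=
    exists_rescaled_solution hB hBA hsum hprod hx
  set A := (C + √(C ^ 2 - 16)) / 2
  have hlam : ∀ t < 1, C * √(1 - t) = √(1 - t) * (fun _ => C) (-Real.log (1 - t)) :=
    fun _ _ => mul_comm _ _
  refine ⟨fromRescaled X,
    realLoewnerSolOn_fromRescaled (σ := fun _ => C) hlam hX₀ (fun s hs => (hX_mem s hs).2.ne)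
      hX_deriv,
    tendsto_fromRescaled_sub (σ := fun _ => C) (M := C - A) hlam fun s hs => ?_, ?_, ?_⟩
  · exact abs_le.2 ⟨by linarith [(hX_mem s hs).1], by linarith [(hX_mem s hs).2]⟩
  · simpa only [exp_half_mul_fromRescaled] using hX_anti
  · simpa only [exp_half_mul_fromRescaled] using hX_lim
end
end
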